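/- arXiv:1007.4620 — 3 statements merged into one kernel-verified Lean document; each statement's English description precedes it below -/
import Mathlib

section
/- Let Γ be a finite connected simple graph with vertex set V and let 𝒯 be a maximal tubing of Γ. Then for every T ∈ 𝒯 ∪ {V}, there is exactly one vertex of T that is not contained in any element of 𝒯 properly contained in T. -/
variable {V : Type*} [Fintype V] [DecidableEq V]

/-- A tube of a simple graph: a nonempty proper subset of vertices whose
induced subgraph is connected. -/
def IsTube (G : SimpleGraph V) (T : Finset V) : Prop :=
  T.Nonempty ∧ T ≠ Finset.univ ∧ (G.induce (T : Set V)).Connected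

/-- A tubing: a set of tubes, pairwise either properly nested or disjoint with
no edge between them. -/
def IsTubing (G : SimpleGraph V) (𝒯 : Finset (Finset V)) : Prop :=
  (∀ T ∈ 𝒯, IsTube G T) ∧
  ∀ T ∈ 𝒯, ∀ T' ∈ 𝒯, T ≠ T' →
    T ⊂ T' ∨ T' ⊂ T ∨
      ((∀ v ∈ T, v ∉ T') ∧ ∀ u ∈ T, ∀ v ∈ T', ¬ G.Adj u v)

/-- A maximal tubing: one not properly contained in any other tubing. -/
def IsMaxTubing (G : SimpleGraph V) (𝒯 : Finset (Finset V)) : Prop :=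
  IsTubing G 𝒯 ∧ ∀ 𝒯' : Finset (Finset V), IsTubing G 𝒯' → 𝒯 ⊆ 𝒯' → 𝒯' = 𝒯

/-!
Call a vertex of `T` free if it lies in no tube of `𝒯` properly inside `T`. A free vertex exists
in any connected `T`, for any tubing: otherwise take a tube `M ⊊ T` of `𝒯` maximal under
inclusion; by connectivity some edge leaves `M` to a vertex of `T`, and the tube of `𝒯` inside `T`
covering that vertex can be neither nested with `M` nor separated from it. If `v ≠ w` were both
free, the connected component of `v` in `T \ {w}` would be a tube compatible with every tube of
`𝒯` (a tube inside `T` avoids `v` and `w`, so it lies in that component or is separated from it)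
but not in `𝒯`, contradicting maximality.
-/

open SimpleGraph

section

variable {W : Type*} {G : SimpleGraph W}

lemma exists_adj_of_mem_of_notMem {T : Set W} (hT : (G.induce T).Connected) {M : Set W}
    {a b : W} (haT : a ∈ T) (hbT : b ∈ T) (haM : a ∈ M) (hbM : b ∉ M) :
    ∃ u ∈ M, ∃ x ∈ T, x ∉ M ∧ G.Adj u x := by
  obtain ⟨p⟩ := hT.preconnected ⟨a, haT⟩ ⟨b, hbT⟩
  obtain ⟨d, -, hu, hx⟩ := p.exists_boundary_dart {y | (y : W) ∈ M} haM hbM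
  exact ⟨d.fst, hu, d.snd, d.snd.2, hx, d.adj⟩

lemma connected_induce_finset_singleton (v : W) :
    (G.induce (({v} : Finset W) : Set W)).Connected := by
  rw [Finset.coe_singleton, induce_singleton_eq_top]
  exact connected_top

def IsComponentIn (G : SimpleGraph W) (A : Finset W) (v : W) (C : Finset W) : Prop :=
  Maximal (fun C : Finset W => v ∈ C ∧ C ⊆ A ∧ (G.induce (C : Set W)).Connected) C

lemma exists_isComponentIn [Finite W] {A : Finset W} {v : W} (hv : v ∈ A) :
    ∃ C, IsComponentIn G A v C := by
  obtain ⟨C, -, hC⟩ := Finite.exists_le_maximal (α := Finset W)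
    (p := fun C => v ∈ C ∧ C ⊆ A ∧ (G.induce (C : Set W)).Connected)
    ⟨Finset.mem_singleton_self v, Finset.singleton_subset_iff.mpr hv,
      connected_induce_finset_singleton v⟩
  exact ⟨C, hC⟩

lemma IsComponentIn.subset_or_separated [DecidableEq W] {A C S : Finset W} {v : W}
    (hC : IsComponentIn G A v C) (hSA : S ⊆ A) (hS : (G.induce (S : Set W)).Connected) :
    S ⊆ C ∨ ((∀ a ∈ C, a ∉ S) ∧ ∀ a ∈ C, ∀ b ∈ S, ¬ G.Adj a b) := by
  obtain ⟨⟨hvC, hCA, hCconn⟩, hCmax⟩ := hC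
  have absorb : (G.induce ((C ∪ S : Finset W) : Set W)).Connected → S ⊆ C := fun hconn =>
    Finset.union_subset_right <| hCmax
      ⟨Finset.mem_union_left S hvC, Finset.union_subset hCA hSA, hconn⟩ Finset.subset_union_left
  by_cases hmeet : ∃ a ∈ C, a ∈ S
  · obtain ⟨a, haC, haS⟩ := hmeet
    left
    apply absorb
    rw [Finset.coe_union]
    exact induce_union_connected hCconn.preconnected hS.preconnected ⟨a, haC, haS⟩
  · push Not at hmeet
    refine Or.inr ⟨hmeet, fun a haC b hbS hab => hmeet b (absorb ?_ hbS) hbS⟩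
    rw [Finset.coe_union]
    exact connected_induce_union hCconn.preconnected hS.preconnected haC hbS hab

def TubesCompatible (G : SimpleGraph W) (T T' : Finset W) : Prop :=
  T ⊂ T' ∨ T' ⊂ T ∨ ((∀ v ∈ T, v ∉ T') ∧ ∀ u ∈ T, ∀ v ∈ T', ¬ G.Adj u v)

lemma TubesCompatible.symm {T T' : Finset W} (h : TubesCompatible G T T') :
    TubesCompatible G T' T := by
  rcases h with hlt | hgt | ⟨hdisj, hnadj⟩
  · exact Or.inr (Or.inl hlt)
  · exact Or.inl hgt
  · exact Or.inr (Or.inr ⟨fun v hv hv' => hdisj v hv' hv,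
      fun u hu v hv hadj => hnadj v hv u hu hadj.symm⟩)

lemma TubesCompatible.of_ssubset {C T S : Finset W} (hCT : C ⊂ T)
    (hTS : T = S ∨ TubesCompatible G T S) (hST : ¬ S ⊂ T) : TubesCompatible G C S := by
  rcases hTS with rfl | hTS | hST' | ⟨hdisj, hnadj⟩
  · exact Or.inl hCT
  · exact Or.inl (hCT.trans hTS)
  · exact absurd hST' hST
  · exact Or.inr (Or.inr ⟨fun v hv => hdisj v (hCT.subset hv),
      fun u hu => hnadj u (hCT.subset hu)⟩)

end

section

variable {G : SimpleGraph V} {𝒯 : Finset (Finset V)}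

lemma IsTubing.insert_tube (h𝒯 : IsTubing G 𝒯) {C : Finset V} (hC : IsTube G C)
    (hcompat : ∀ S ∈ 𝒯, S ≠ C → TubesCompatible G C S) : IsTubing G (insert C 𝒯) := by
  refine ⟨fun S hS => ?_, fun S hS S' hS' hne => ?_⟩
  · rcases Finset.mem_insert.mp hS with rfl | hS
    exacts [hC, h𝒯.1 S hS]
  rcases Finset.mem_insert.mp hS with rfl | hS𝒯 <;>
    rcases Finset.mem_insert.mp hS' with rfl | hS'𝒯
  · exact absurd rfl hne
  · exact hcompat S' hS'𝒯 hne.symm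
  · exact (hcompat S hS𝒯 hne).symm
  · exact h𝒯.2 S hS𝒯 S' hS'𝒯 hne

lemma IsMaxTubing.mem_of_forall_compatible (h𝒯 : IsMaxTubing G 𝒯) {C : Finset V}
    (hC : IsTube G C) (hcompat : ∀ S ∈ 𝒯, S ≠ C → TubesCompatible G C S) : C ∈ 𝒯 :=
  h𝒯.2 _ (h𝒯.1.insert_tube hC hcompat) (Finset.subset_insert C 𝒯) ▸ Finset.mem_insert_self C 𝒯

lemma IsTubing.exists_free_vertex (h𝒯 : IsTubing G 𝒯) {T : Finset V}
    (hT : (G.induce (T : Set V)).Connected) : ∃ v ∈ T, ∀ S ∈ 𝒯, S ⊂ T → v ∉ S := by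
  by_contra! hcovered
  obtain ⟨v, hv⟩ := hT.nonempty
  obtain ⟨S₀, hS₀𝒯, hS₀T, -⟩ := hcovered v hv
  obtain ⟨M, -, ⟨hM𝒯, hMT⟩, hMmax⟩ := Finite.exists_le_maximal (α := Finset V)
    (p := fun S => S ∈ 𝒯 ∧ S ⊂ T) ⟨hS₀𝒯, hS₀T⟩
  obtain ⟨a, haM⟩ := (h𝒯.1 M hM𝒯).1
  obtain ⟨b, hbT, hbM⟩ := Finset.exists_of_ssubset hMT
  obtain ⟨u, huM, x, hxT, hxM, hux⟩ := exists_adj_of_mem_of_notMem (M := (M : Set V)) hT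
    (hMT.subset haM) hbT haM hbM
  obtain ⟨S, hS𝒯, hST, hxS⟩ := hcovered x hxT
  have hne : M ≠ S := fun h => hxM (h ▸ hxS)
  rcases h𝒯.2 M hM𝒯 S hS𝒯 hne with hMS | hSM | ⟨-, hnadj⟩
  · exact hMS.ne (le_antisymm hMS.subset (hMmax ⟨hS𝒯, hST⟩ hMS.subset))
  · exact hxM (hSM.subset hxS)
  · exact hnadj u huM x hxS hux

lemma IsMaxTubing.free_vertex_unique (h𝒯 : IsMaxTubing G 𝒯) {T : Finset V}
    (hT : ∀ S ∈ 𝒯, T = S ∨ TubesCompatible G T S) {v w : V}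
    (hvT : v ∈ T) (hv : ∀ S ∈ 𝒯, S ⊂ T → v ∉ S) (hwT : w ∈ T) (hw : ∀ S ∈ 𝒯, S ⊂ T → w ∉ S) :
    v = w := by
  by_contra hvw
  obtain ⟨C, hC⟩ := exists_isComponentIn (G := G) (Finset.mem_erase.mpr ⟨hvw, hvT⟩)
  obtain ⟨hvC, hCA, hCconn⟩ := hC.prop
  have hwC : w ∉ C := fun hwC => Finset.notMem_erase w T (hCA hwC)
  have hCT : C ⊂ T := Finset.ssubset_iff_subset_ne.mpr
    ⟨hCA.trans (Finset.erase_subset w T), fun h => hwC (h ▸ hwT)⟩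
  have hCtube : IsTube G C :=
    ⟨⟨v, hvC⟩, fun h => hwC (h ▸ Finset.mem_univ w), hCconn⟩
  refine hv C (h𝒯.mem_of_forall_compatible hCtube fun S hS𝒯 hSC => ?_) hCT hvC
  by_cases hST : S ⊂ T
  · have hSA : S ⊆ T.erase w := fun x hxS =>
      Finset.mem_erase.mpr ⟨fun h => hw S hS𝒯 hST (h ▸ hxS), hST.subset hxS⟩
    rcases hC.subset_or_separated hSA (h𝒯.1.1 S hS𝒯).2.2 with hSC' | hsep
    · exact Or.inr (Or.inl (Finset.ssubset_iff_subset_ne.mpr ⟨hSC', hSC⟩))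
    · exact Or.inr (Or.inr hsep)
  · exact TubesCompatible.of_ssubset hCT (hT S hS𝒯) hST

lemma IsTubing.eq_or_compatible_of_mem_insert_univ (h𝒯 : IsTubing G 𝒯) {T : Finset V}
    (hT : T ∈ insert Finset.univ 𝒯) : ∀ S ∈ 𝒯, T = S ∨ TubesCompatible G T S := by
  intro S hS
  rcases Finset.mem_insert.mp hT with rfl | hT
  · exact Or.inr (Or.inr (Or.inl (Finset.ssubset_univ_iff.mpr (h𝒯.1 S hS).2.1)))
  · by_cases hTS : T = S
    exacts [Or.inl hTS, Or.inr (h𝒯.2 T hT S hS hTS)]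

lemma IsTubing.connected_of_mem_insert_univ (hG : G.Connected) (h𝒯 : IsTubing G 𝒯)
    {T : Finset V} (hT : T ∈ insert Finset.univ 𝒯) : (G.induce (T : Set V)).Connected := by
  rcases Finset.mem_insert.mp hT with rfl | hT
  · rw [Finset.coe_univ]
    exact (induceUnivIso G).connected_iff.mpr hG
  · exact (h𝒯.1 T hT).2.2

end

theorem maximal_tubing_unique_free_vertex_in_tube
    (G : SimpleGraph V) (hG : G.Connected)
    (𝒯 : Finset (Finset V)) (h : IsMaxTubing G 𝒯) :
    ∀ T ∈ insert Finset.univ 𝒯,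
      ∃! v, v ∈ T ∧ ∀ S ∈ 𝒯, S ⊂ T → v ∉ S := by
  intro T hT
  have h𝒯 : IsTubing G 𝒯 := h.1
  obtain ⟨v, hvT, hv⟩ := h𝒯.exists_free_vertex (h𝒯.connected_of_mem_insert_univ hG hT)
  refine ⟨v, ⟨hvT, hv⟩, fun w ⟨hwT, hw⟩ => ?_⟩
  exact (h.free_vertex_unique (h𝒯.eq_or_compatible_of_mem_insert_univ hT) hvT hv hwT hw).symm
end

section
/- If a tubing of a finite connected simple graph with m vertices contains exactly m − 1 tubes, then it is a maximal tubing. -/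
/-!
Adjoin the whole vertex set `V` to the tubing, which is possible because `Γ` is connected. In the
resulting family every member `T` contains a vertex lying in no member properly inside `T`:
otherwise a largest member below `T` through a fixed vertex would, by connectivity of `T`, be
adjacent to another member below `T`, which compatibility forbids. Such a vertex lies in no
member disjoint from `T` either, so choosing one per member is injective. Hence a tubing has at
most `m - 1` tubes, and one with `m - 1` tubes admits no proper extension.
-/

variable {V : Type*} [Fintype V] [DecidableEq V]

def TubeCompatible (G : SimpleGraph V) (S T : Finset V) : Prop :=
  S ⊂ T ∨ T ⊂ S ∨ ((∀ v ∈ S, v ∉ T) ∧ ∀ u ∈ S, ∀ v ∈ T, ¬ G.Adj u v)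

namespace SimpleGraph

theorem exists_adj_of_ssubset_of_induce_connected {W : Type*} {H : SimpleGraph W}
    {S T : Finset W} (hT : (H.induce (T : Set W)).Connected) (hST : S ⊂ T) (hS : S.Nonempty) :
    ∃ u ∈ S, ∃ w ∈ T, w ∉ S ∧ H.Adj u w := by
  obtain ⟨v, hvS⟩ := hS
  obtain ⟨w, hwT, hwS⟩ := Finset.exists_of_ssubset hST
  obtain ⟨p⟩ := hT.preconnected ⟨v, hST.1 hvS⟩ ⟨w, hwT⟩
  obtain ⟨d, -, hdS, hdS'⟩ := p.exists_boundary_dart {x | x.1 ∈ S} hvS hwS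
  exact ⟨d.fst, hdS, d.snd, d.snd.2, hdS', d.adj⟩

variable {G : SimpleGraph V} {𝒮 : Finset (Finset V)}

theorem exists_mem_forall_ssubset_not_mem
    (hcompat : (𝒮 : Set (Finset V)).Pairwise (TubeCompatible G)) {T : Finset V}
    (hT : (G.induce (T : Set V)).Connected) :
    ∃ v ∈ T, ∀ S ∈ 𝒮, S ⊂ T → v ∉ S := by
  by_contra! hcover
  obtain ⟨⟨v₀, hv₀⟩⟩ := hT.nonempty
  obtain ⟨S, hS, hSmax⟩ := Finset.exists_max_image (𝒮.filter fun U => U ⊂ T ∧ v₀ ∈ U)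
    Finset.card (by obtain ⟨S, hS⟩ := hcover v₀ hv₀; exact ⟨S, Finset.mem_filter.mpr hS⟩)
  obtain ⟨hS𝒮, hST, hv₀S⟩ := Finset.mem_filter.mp hS
  obtain ⟨u, huS, w, hwT, hwS, huw⟩ :=
    exists_adj_of_ssubset_of_induce_connected hT hST ⟨v₀, hv₀S⟩
  obtain ⟨S', hS'𝒮, hS'T, hwS'⟩ := hcover w hwT
  rcases hcompat hS𝒮 hS'𝒮 (by rintro rfl; exact hwS hwS') with hSS' | hS'S | ⟨-, hnonadj⟩
  · have hS' : S' ∈ 𝒮.filter fun U => U ⊂ T ∧ v₀ ∈ U :=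
      Finset.mem_filter.mpr ⟨hS'𝒮, hS'T, hSS'.1 hv₀S⟩
    exact (hSmax S' hS').not_gt (Finset.card_lt_card hSS')
  · exact hwS (hS'S.1 hwS')
  · exact hnonadj u huS w hwS' huw

theorem card_le_univ_of_pairwise_tubeCompatible
    (hconn : ∀ T ∈ 𝒮, (G.induce (T : Set V)).Connected)
    (hcompat : (𝒮 : Set (Finset V)).Pairwise (TubeCompatible G)) :
    𝒮.card ≤ Fintype.card V := by
  choose f hfT hfree using
    fun T (hT : T ∈ 𝒮) => exists_mem_forall_ssubset_not_mem hcompat (hconn T hT)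
  rw [← Fintype.card_coe 𝒮]
  refine Fintype.card_le_of_injective (fun T : 𝒮 => f T T.2) ?_
  rintro ⟨T₁, hT₁⟩ ⟨T₂, hT₂⟩ (hf : f T₁ hT₁ = f T₂ hT₂)
  by_contra hne
  rcases hcompat hT₁ hT₂ (fun h => hne (Subtype.ext h)) with h12 | h21 | ⟨hdisj, -⟩
  · exact hfree T₂ hT₂ T₁ hT₁ h12 (hf ▸ hfT T₁ hT₁)
  · exact hfree T₁ hT₁ T₂ hT₂ h21 (hf ▸ hfT T₂ hT₂)
  · exact hdisj _ (hfT T₁ hT₁) (hf ▸ hfT T₂ hT₂)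

end SimpleGraph

open SimpleGraph in
theorem IsTubing.card_lt {G : SimpleGraph V} (hG : G.Connected) {𝒯 : Finset (Finset V)}
    (h : IsTubing G 𝒯) : 𝒯.card < Fintype.card V := by
  have huniv : Finset.univ ∉ 𝒯 := fun hu => (h.1 _ hu).2.1 rfl
  have hconn : ∀ T ∈ insert Finset.univ 𝒯, (G.induce (T : Set V)).Connected := by
    refine Finset.forall_mem_insert _ _ _ |>.mpr ⟨?_, fun T hT => (h.1 T hT).2.2⟩
    rw [Finset.coe_univ]
    exact (induceUnivIso G).connected_iff.mpr hG
  have hcompat : (↑(insert Finset.univ 𝒯) : Set (Finset V)).Pairwise (TubeCompatible G) := by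
    have hlt : ∀ T ∈ 𝒯, T ⊂ Finset.univ := fun T hT => Finset.ssubset_univ_iff.mpr (h.1 T hT).2.1
    rw [Finset.coe_insert]
    exact (show (𝒯 : Set (Finset V)).Pairwise (TubeCompatible G) from h.2).insert
      fun T hT _ => ⟨Or.inr (Or.inl (hlt T hT)), Or.inl (hlt T hT)⟩
  simpa [huniv] using card_le_univ_of_pairwise_tubeCompatible hconn hcompat

theorem tubing_of_card_pred_is_maximal
    (G : SimpleGraph V) (hG : G.Connected)
    (𝒯 : Finset (Finset V)) (h : IsTubing G 𝒯)
    (hcard : 𝒯.card = Fintype.card V - 1) :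
    IsMaxTubing G 𝒯 := by
  refine ⟨h, fun 𝒯' h' hsub => (Finset.eq_of_subset_of_card_le hsub ?_).symm⟩
  have := h'.card_lt hG
  omega
end

section
/- Let Γ be a finite connected simple graph with at least two vertices and let 𝒯 be a maximal tubing of Γ. Then there is exactly one vertex of Γ that is contained in no tube of 𝒯. -/
variable {V : Type*} [Fintype V] [DecidableEq V]

/-! If every vertex were covered, a maximal tube `M` would be adjacent to a vertex outside it
(since `Γ` is connected and `M` is proper), which lies in another maximal tube; but distinct
maximal tubes of a tubing are non-adjacent. If two vertices `v ≠ w` were uncovered, the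
component of `v` in `Γ - w` is a tube compatible with every tube of `𝒯`: tubes meeting it
or adjacent to it are contained in it, by maximality of the component. -/

lemma SimpleGraph.Preconnected.exists_adj_of_mem_of_notMem {W : Type*} {G : SimpleGraph W}
    (hG : G.Preconnected) {S : Set W} {u v : W} (hu : u ∈ S) (hv : v ∉ S) :
    ∃ a ∈ S, ∃ b ∉ S, G.Adj a b := by
  obtain ⟨d, -, hd, hd'⟩ := (hG u v).some.exists_boundary_dart S hu hv
  exact ⟨_, hd, _, hd', d.adj⟩

section Tubing

open Finset SimpleGraph

variable {V : Type*} [Fintype V] {G : SimpleGraph V} {𝒯 : Finset (Finset V)}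

lemma IsTubing.not_adj_of_maximal (ht : IsTubing G 𝒯) {M M' : Finset V}
    (hM : Maximal (· ∈ 𝒯) M) (hM' : Maximal (· ∈ 𝒯) M') (hne : M ≠ M') {a b : V}
    (ha : a ∈ M) (hb : b ∈ M') : ¬ G.Adj a b := by
  rcases ht.2 M hM.1 M' hM'.1 hne with hlt | hlt | ⟨-, hedge⟩
  · exact absurd (hM.eq_of_le hM'.1 hlt.le) hne
  · exact absurd (hM'.eq_of_le hM.1 hlt.le).symm hne
  · exact hedge a ha b hb

lemma IsTubing.exists_forall_notMem (hG : G.Connected) (ht : IsTubing G 𝒯) :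
    ∃ v, ∀ T ∈ 𝒯, v ∉ T := by
  by_contra! hcover
  have hmax : ∀ v, ∃ M, Maximal (· ∈ 𝒯) M ∧ v ∈ M := fun v => by
    obtain ⟨T, hT, hvT⟩ := hcover v
    obtain ⟨M, hTM, hM⟩ := 𝒯.exists_le_maximal hT
    exact ⟨M, hM, hTM hvT⟩
  obtain ⟨M, hM, hv₀M⟩ := hmax hG.nonempty.some
  obtain ⟨x, hxM⟩ := not_forall.mp fun hall => (ht.1 M hM.1).2.1 (eq_univ_iff_forall.mpr hall)
  obtain ⟨a, haM, b, hbM, hab⟩ :=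
    hG.preconnected.exists_adj_of_mem_of_notMem (S := (M : Set V)) hv₀M hxM
  obtain ⟨M', hM', hbM'⟩ := hmax b
  exact ht.not_adj_of_maximal hM hM' (by rintro rfl; exact hbM hbM') haM hbM' hab

lemma IsTubing.insert [DecidableEq V] (ht : IsTubing G 𝒯) {C : Finset V} (hC : IsTube G C)
    (hcompat : ∀ T ∈ 𝒯, T ≠ C → T ⊂ C ∨ C ⊂ T ∨
      ((∀ x ∈ T, x ∉ C) ∧ ∀ a ∈ T, ∀ b ∈ C, ¬ G.Adj a b)) :
    IsTubing G (insert C 𝒯) := by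
  have hcompat' : ∀ T ∈ 𝒯, C ≠ T → C ⊂ T ∨ T ⊂ C ∨
      ((∀ x ∈ C, x ∉ T) ∧ ∀ a ∈ C, ∀ b ∈ T, ¬ G.Adj a b) := by
    intro T hT hne
    rcases hcompat T hT hne.symm with h | h | ⟨hdisj, hedge⟩
    · exact .inr (.inl h)
    · exact .inl h
    · exact .inr (.inr ⟨fun x hxC hxT => hdisj x hxT hxC,
        fun a ha b hb hab => hedge b hb a ha hab.symm⟩)
  refine ⟨forall_mem_insert _ _ _ |>.mpr ⟨hC, ht.1⟩, fun T hT T' hT' hne => ?_⟩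
  rcases mem_insert.mp hT with rfl | hT𝒯 <;> rcases mem_insert.mp hT' with rfl | hT'𝒯
  · exact absurd rfl hne
  · exact hcompat' T' hT'𝒯 hne
  · exact hcompat T hT𝒯 hne
  · exact ht.2 T hT𝒯 T' hT'𝒯 hne

/-- `C` is the vertex set of the connected component of `v` in `G - w`. -/
lemma ssubset_or_separated_of_maximal_connected [DecidableEq V] {v w : V} {C T : Finset V}
    (hC : Maximal (fun X : Finset V => v ∈ X ∧ w ∉ X ∧ (G.induce (X : Set V)).Connected) C)
    (hT : IsTube G T) (hvT : v ∉ T) (hwT : w ∉ T) :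
    T ⊂ C ∨ ((∀ x ∈ T, x ∉ C) ∧ ∀ a ∈ T, ∀ b ∈ C, ¬ G.Adj a b) := by
  obtain ⟨hvC, hwC, hCconn⟩ := hC.1
  have hsub : (G.induce ((T ∪ C : Finset V) : Set V)).Connected → T ⊆ C := fun hconn =>
    (union_subset_iff.mp <| hC.2 ⟨mem_union_right _ hvC, by simp [hwT, hwC], hconn⟩
      subset_union_right).1
  by_cases hmeet : ∃ x ∈ T, x ∈ C
  · obtain ⟨x, hxT, hxC⟩ := hmeet
    have hTC : T ⊆ C := hsub <| by
      rw [coe_union]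
      exact induce_union_connected hT.2.2.preconnected hCconn.preconnected ⟨x, hxT, hxC⟩
    exact .inl <| (ssubset_iff_of_subset hTC).mpr ⟨v, hvC, hvT⟩
  · push Not at hmeet
    refine .inr ⟨hmeet, fun a ha b hb hab => ?_⟩
    obtain ⟨x, hxT⟩ := hT.1
    refine hmeet x hxT (hsub ?_ hxT)
    rw [coe_union]
    exact connected_induce_union hT.2.2.preconnected hCconn.preconnected ha hb hab

lemma IsMaxTubing.eq_of_forall_notMem [DecidableEq V] (h : IsMaxTubing G 𝒯) {v w : V}
    (hv : ∀ T ∈ 𝒯, v ∉ T) (hw : ∀ T ∈ 𝒯, w ∉ T) : v = w := by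
  by_contra hvw
  have hsingleton : (G.induce (({v} : Finset V) : Set V)).Connected := by
    rw [coe_singleton]
    exact (connected_iff _).mpr ⟨.of_subsingleton, ⟨⟨v, rfl⟩⟩⟩
  obtain ⟨C, -, hC⟩ := Finite.exists_le_maximal
    (p := fun X : Finset V => v ∈ X ∧ w ∉ X ∧ (G.induce (X : Set V)).Connected)
    ⟨mem_singleton_self v, by simpa [eq_comm] using hvw, hsingleton⟩
  have hCtube : IsTube G C :=
    ⟨⟨v, hC.1.1⟩, fun hCu => hC.1.2.1 (hCu ▸ mem_univ w), hC.1.2.2⟩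
  have hins : IsTubing G (insert C 𝒯) := h.1.insert hCtube fun T hT _ =>
    (ssubset_or_separated_of_maximal_connected hC (h.1.1 T hT) (hv T hT) (hw T hT)).imp_right
      .inr
  have hC𝒯 : C ∈ 𝒯 := h.2 _ hins (subset_insert _ _) ▸ mem_insert_self C 𝒯
  exact hv C hC𝒯 hC.1.1

end Tubing

theorem maximal_tubing_unique_untubed_vertex_general
    (G : SimpleGraph V) (hG : G.Connected)
    (𝒯 : Finset (Finset V)) (h : IsMaxTubing G 𝒯) :
    ∃! v : V, ∀ T ∈ 𝒯, v ∉ T := by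
  obtain ⟨v, hv⟩ := h.1.exists_forall_notMem hG
  exact ⟨v, hv, fun w hw => (h.eq_of_forall_notMem hv hw).symm⟩

theorem maximal_tubing_unique_untubed_vertex
    (G : SimpleGraph V) (hG : G.Connected) (hV : 2 ≤ Fintype.card V)
    (𝒯 : Finset (Finset V)) (h : IsMaxTubing G 𝒯) :
    ∃! v : V, ∀ T ∈ 𝒯, v ∉ T :=
  maximal_tubing_unique_untubed_vertex_general G hG 𝒯 h
end
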